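/- The function φ(q) := q^{(1−k̃)/2}·(1−q)^{(1+k̃)/2} satisfies φ''(q) = ((k̃²−1)/4)·q^{−(3+k̃)/2}·(1−q)^{−(3−k̃)/2} for every q ∈ (0,1). Consequently, since d_B > 0 and k̃ > 1, the function W satisfies W''(q) > 0 for every q ∈ (0,1), i.e., W is strictly convex on (0,1). -/

import Mathlib

set_option autoImplicit false

/-!
With `a = (1 - k̃)/2` and `b = (1 + k̃)/2` we have `a + b = 1`, so `a(a-1) = b(b-1) = -ab` and
the second derivative of `x^a (1-x)^b` collapses to `-ab · x^(a-2) (1-x)^(b-2)`, where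
`-ab = (k̃² - 1)/4 > 0` as `k̃ > 1`. The function `W` differs from `d_B · φ` by an affine
function, and `d_B > 0` because `q_B` lies strictly between `0` and `(μ - R - l)/(h - l)`,
which makes the numerator of `d_B` positive.
-/

open Real Set Filter Topology

theorem hasDerivAt_rpow_mul_one_sub_rpow (a b : ℝ) {x : ℝ} (hx : x ∈ Ioo (0 : ℝ) 1) :
    HasDerivAt (fun y => y ^ a * (1 - y) ^ b)
      (a * x ^ (a - 1) * (1 - x) ^ b - b * x ^ a * (1 - x) ^ (b - 1)) x := by
  have hpow := hasDerivAt_rpow_const (p := a) (Or.inl hx.1.ne')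
  have hpow_sub := ((hasDerivAt_id' x).const_sub 1).rpow_const (p := b)
    (Or.inl (sub_pos.2 hx.2).ne')
  exact (hpow.fun_mul hpow_sub).congr_deriv (by ring)

theorem deriv_deriv_rpow_mul_one_sub_rpow (a b : ℝ) {x : ℝ} (hx : x ∈ Ioo (0 : ℝ) 1) :
    deriv (deriv fun y => y ^ a * (1 - y) ^ b) x =
      (a * (a - 1) * (1 - x) ^ 2 - 2 * a * b * x * (1 - x) + b * (b - 1) * x ^ 2)
        * x ^ (a - 2) * (1 - x) ^ (b - 2) := by
  have hderiv : deriv (fun y => y ^ a * (1 - y) ^ b) =ᶠ[𝓝 x]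
      fun y => a * (y ^ (a - 1) * (1 - y) ^ b) - b * (y ^ a * (1 - y) ^ (b - 1)) :=
    eventually_of_mem (isOpen_Ioo.mem_nhds hx) fun y hy =>
      (hasDerivAt_rpow_mul_one_sub_rpow a b hy).deriv.trans (by ring)
  rw [hderiv.deriv_eq, (((hasDerivAt_rpow_mul_one_sub_rpow (a - 1) b hx).const_mul a).fun_sub
    ((hasDerivAt_rpow_mul_one_sub_rpow a (b - 1) hx).const_mul b)).deriv]
  have hx₀ : 0 < x := hx.1
  have hx₁ : 0 < 1 - x := sub_pos.2 hx.2
  rw [rpow_sub hx₀ a 2, rpow_sub hx₁ b 2, rpow_two, rpow_two]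
  simp only [rpow_sub_one hx₀.ne', rpow_sub_one hx₁.ne']
  field_simp
  ring

theorem deriv_deriv_rpow_mul_one_sub_rpow_of_add_eq_one {a b : ℝ} (hab : a + b = 1) {x : ℝ}
    (hx : x ∈ Ioo (0 : ℝ) 1) :
    deriv (deriv fun y => y ^ a * (1 - y) ^ b) x = -(a * b) * x ^ (a - 2) * (1 - x) ^ (b - 2) := by
  rw [deriv_deriv_rpow_mul_one_sub_rpow a b hx]
  obtain rfl : b = 1 - a := by linarith
  ring

theorem deriv_deriv_affine_add_const_mul {f : ℝ → ℝ} {s : Set ℝ} (hs : IsOpen s)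
    (hf : DifferentiableOn ℝ f s) (u v c : ℝ) {x : ℝ} (hx : x ∈ s) :
    deriv (deriv fun y => y * u + (1 - y) * v + c * f y) x = c * deriv (deriv f) x := by
  have hderiv : deriv (fun y => y * u + (1 - y) * v + c * f y) =ᶠ[𝓝 x]
      fun y => (u - v) + c * deriv f y :=
    eventually_of_mem (hs.mem_nhds hx) fun y hy =>
      ((((hasDerivAt_id' y).mul_const u).add (((hasDerivAt_id' y).const_sub 1).mul_const v)).add
        (((hf y hy).differentiableAt (hs.mem_nhds hy)).hasDerivAt.const_mul c)).deriv.trans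
        (by ring)
  rw [hderiv.deriv_eq, deriv_const_add, deriv_const_mul_field]

theorem one_lt_sqrt_one_add {t : ℝ} (ht : 0 < t) : 1 < √(1 + t) := by
  rw [lt_sqrt zero_le_one]
  linarith

theorem pos_and_mul_lt_of_eq_div {A D k q : ℝ} (hA : 0 < A) (hAD : A < D) (hk : 1 < k)
    (hq : q = -A * ((1 - k) / 2) / (D * ((1 + k) / 2) - A)) : 0 < q ∧ q * D < A := by
  have hden : 0 < D * ((1 + k) / 2) - A := by nlinarith
  subst hq
  constructor
  · exact div_pos (by nlinarith) hden
  · rw [div_mul_eq_mul_div, div_lt_iff₀ hden]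
    nlinarith

theorem stmt_11_general (l μ h ρ σt R : ℝ)
    (hμh : μ < h) (hρ : 0 < ρ) (hσt : 0 < σt)
    (hR : 0 < R) (hlR : l < μ - R)
    (kt qB dB : ℝ)
    (hkt : kt = Real.sqrt (1 + 8 * ρ * (σt / (h - l)) ^ 2))
    (hqB : qB = (l - μ + R) * ((1 - kt) / 2)
      / ((h - l) * ((1 + kt) / 2) + l - μ + R))
    (hdB : dB = (μ - R - qB * h - (1 - qB) * l)
      / (qB ^ ((1 - kt) / 2) * (1 - qB) ^ ((1 + kt) / 2)))
    (φ W : ℝ → ℝ)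
    (hφ : ∀ q : ℝ, φ q = q ^ ((1 - kt) / 2) * (1 - q) ^ ((1 + kt) / 2))
    (hW : ∀ q : ℝ, W q = q * h + (1 - q) * l + dB * φ q) :
    (∀ q ∈ Set.Ioo (0 : ℝ) 1,
      deriv (deriv φ) q
        = ((kt ^ 2 - 1) / 4) * q ^ (-(3 + kt) / 2) * (1 - q) ^ (-(3 - kt) / 2))
    ∧ (∀ q ∈ Set.Ioo (0 : ℝ) 1, 0 < deriv (deriv W) q)
    ∧ StrictConvexOn ℝ (Set.Ioo (0 : ℝ) 1) W := by
  have hD : 0 < h - l := by linarith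
  have hk : 1 < kt := hkt ▸ one_lt_sqrt_one_add (by positivity)
  obtain ⟨hqB₀, hqBD⟩ := pos_and_mul_lt_of_eq_div (A := μ - R - l) (D := h - l) (q := qB)
    (by linarith) (by linarith) hk (by rw [hqB]; ring)
  have hqB₁ : 0 < 1 - qB := by nlinarith
  have hdB₀ : 0 < dB := hdB ▸ div_pos (by linarith) (by positivity)
  have hφ_eq : φ = fun y => y ^ ((1 - kt) / 2) * (1 - y) ^ ((1 + kt) / 2) := funext hφ
  have hφ'' : ∀ q ∈ Ioo (0 : ℝ) 1, deriv (deriv φ) q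
      = ((kt ^ 2 - 1) / 4) * q ^ (-(3 + kt) / 2) * (1 - q) ^ (-(3 - kt) / 2) := fun q hq => by
    rw [hφ_eq, deriv_deriv_rpow_mul_one_sub_rpow_of_add_eq_one (by ring) hq]
    ring_nf
  have hφ_diff : DifferentiableOn ℝ φ (Ioo 0 1) := fun q hq =>
    hφ_eq ▸ (hasDerivAt_rpow_mul_one_sub_rpow _ _ hq).differentiableAt.differentiableWithinAt
  have hW_eq : W = fun q => q * h + (1 - q) * l + dB * φ q := funext hW
  have hW'' : ∀ q ∈ Ioo (0 : ℝ) 1, 0 < deriv (deriv W) q := fun q hq => by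
    rw [hW_eq, deriv_deriv_affine_add_const_mul isOpen_Ioo hφ_diff h l dB hq, hφ'' q hq]
    have hc : 0 < (kt ^ 2 - 1) / 4 := by nlinarith
    have hq₀ := hq.1
    have hq₁ := sub_pos.2 hq.2
    positivity
  refine ⟨hφ'', hW'', strictConvexOn_of_deriv2_pos' (convex_Ioo 0 1) ?_ hW''⟩
  rw [hW_eq]
  have hφ_cont := hφ_diff.continuousOn
  fun_prop

/-- `φ(q) = q^{(1−k̃)/2}(1−q)^{(1+k̃)/2}` satisfies
`φ''(q) = ((k̃²−1)/4) q^{−(3+k̃)/2}(1−q)^{−(3−k̃)/2}` on `(0,1)`; consequently,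
since `d_B > 0` and `k̃ > 1`, `W'' > 0` on `(0,1)`, i.e. `W` is strictly convex
on `(0,1)`. -/
theorem stmt_11 (l μ h ρ σt R : ℝ)
    (hl : 0 < l) (hlμ : l < μ) (hμh : μ < h) (hρ : 0 < ρ) (hσt : 0 < σt)
    (hR : 0 < R) (hlR : l < μ - R)
    (kt qB dB : ℝ)
    (hkt : kt = Real.sqrt (1 + 8 * ρ * (σt / (h - l)) ^ 2))
    (hqB : qB = (l - μ + R) * ((1 - kt) / 2)
      / ((h - l) * ((1 + kt) / 2) + l - μ + R))
    (hdB : dB = (μ - R - qB * h - (1 - qB) * l)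
      / (qB ^ ((1 - kt) / 2) * (1 - qB) ^ ((1 + kt) / 2)))
    (φ W : ℝ → ℝ)
    (hφ : ∀ q : ℝ, φ q = q ^ ((1 - kt) / 2) * (1 - q) ^ ((1 + kt) / 2))
    (hW : ∀ q : ℝ, W q = q * h + (1 - q) * l + dB * φ q) :
    (∀ q ∈ Set.Ioo (0 : ℝ) 1,
      deriv (deriv φ) q
        = ((kt ^ 2 - 1) / 4) * q ^ (-(3 + kt) / 2) * (1 - q) ^ (-(3 - kt) / 2))
    ∧ (∀ q ∈ Set.Ioo (0 : ℝ) 1, 0 < deriv (deriv W) q)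
    ∧ StrictConvexOn ℝ (Set.Ioo (0 : ℝ) 1) W :=
  stmt_11_general l μ h ρ σt R hμh hρ hσt hR hlR kt qB dB hkt hqB hdB φ W hφ hW
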